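/- arXiv:1412.1539 — 2 statements merged into one kernel-verified Lean document; each statement's English description precedes it below -/
import Mathlib

section
/- Let n ≥ 4 be an integer and let H, α, S be real numbers with λ₁ = -(n/2)·H, λₙ = (3/2)·n·H - (n-2)·α, and λₙ - α ≠ 0. If 2·S + H·(-3nH + 2(n-1)α) = 0 and (2n(4-n)H + 2(n-2)(n-1)α)·S/(λₙ-α) + H·((-7n+10)·n·H + 4·(n-1)·(n-2)·α) = 0, then 3·(n-2)·H·(3·n·H - 2·(n-1)·α)² = 0. -/
theorem elimination_3_27_3_28 (n : ℤ) (hn : 4 ≤ n) (H α S : ℝ)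
    (lam1 lamn : ℝ)
    (h1 : lam1 = -((n : ℝ) / 2) * H)
    (h2 : lamn = (3 / 2) * (n : ℝ) * H - ((n : ℝ) - 2) * α)
    (hne : lamn - α ≠ 0)
    (e1 : 2 * S + H * (-3 * (n : ℝ) * H + 2 * ((n : ℝ) - 1) * α) = 0)
    (e2 : (2 * (n : ℝ) * (4 - (n : ℝ)) * H + 2 * ((n : ℝ) - 2) * ((n : ℝ) - 1) * α) * S /
            (lamn - α) +
          H * ((-7 * (n : ℝ) + 10) * (n : ℝ) * H + 4 * ((n : ℝ) - 1) * ((n : ℝ) - 2) * α) = 0) :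
    3 * ((n : ℝ) - 2) * H * (3 * (n : ℝ) * H - 2 * ((n : ℝ) - 1) * α) ^ 2 = 0 := by
  have e2' : (2 * (n : ℝ) * (4 - (n : ℝ)) * H + 2 * ((n : ℝ) - 2) * ((n : ℝ) - 1) * α) * S +
      H * ((-7 * (n : ℝ) + 10) * (n : ℝ) * H + 4 * ((n : ℝ) - 1) * ((n : ℝ) - 2) * α) *
        (lamn - α) = 0 := by
    field_simp at e2
    linarith [e2]
  subst h2
  linear_combination (-2 : ℝ) * e2' +
    (2 * (n : ℝ) * (4 - (n : ℝ)) * H + 2 * ((n : ℝ) - 2) * ((n : ℝ) - 1) * α) * e1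
end

section
/- Let n > p ≥ 2 be integers with c = 2/n (i.e., n·c = 2). Then the three real numbers X, Y, α with α ≠ 0 cannot simultaneously satisfy: X - (1 + 2/(nc+2))·Y/α + (nc/2)·(nc/2+1)·α³ = 0, Y + ((nc+2)·(nc(n-p)+3nc-2(p-1))/(4(n-p)))·α⁴ = 0, and -X + (2(p-1)/(nc+2) + (n-p)(3nc-2(p-1))/(nc(n-p)+3nc-2(p-1)))·Y/α + (n²c²/4 + (p-1)² + (3nc-2(p-1))²/(4(n-p)))·α³ = 0, where X stands for e₁e₁(α) and Y for (e₁α)². -/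
/-!
With `n c = 2`, write `m = n - p > 0`, `q = p - 1 > 0` and `K = m + 3 - q ≠ 0`. The second equation
gives `Y = -2 K α⁴ / m`. Adding the first and third equations eliminates `X`, and substituting `Y`
leaves `α³ (m (q² + q) + 2 (3 - q)²) / m = 0`, which is impossible since the bracket is positive.
-/

theorem reduced_system_no_solution {m q X Y α : ℝ} (hm : 0 < m) (hq : 0 < q)
    (hK : m + 3 - q ≠ 0) (hα : α ≠ 0)
    (h1 : X - 3 / 2 * Y / α + 2 * α ^ 3 = 0)
    (h2 : Y + 2 * (m + 3 - q) / m * α ^ 4 = 0)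
    (h3 : -X + (q / 2 + m * (3 - q) / (m + 3 - q)) * Y / α
      + (1 + q ^ 2 + (3 - q) ^ 2 / m) * α ^ 3 = 0) : False := by
  have hY : Y = -(2 * (m + 3 - q) / m) * α ^ 4 := by linear_combination h2
  rw [hY] at h1 h3
  field_simp at h1 h3
  have key : α ^ 3 * (m * (q ^ 2 + q) + 2 * (3 - q) ^ 2) = 0 := by linear_combination h1 + h3
  exact mul_ne_zero (pow_ne_zero 3 hα) (by positivity) key

theorem no_solution_nc_eq_two (n p : ℤ) (hp : 2 ≤ p) (hpn : p < n) (c : ℝ)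
    (hc : (n : ℝ) * c = 2)
    (hden : (n : ℝ) * c * ((n : ℝ) - p) + 3 * (n : ℝ) * c - 2 * ((p : ℝ) - 1) ≠ 0)
    (X Y α : ℝ) (hα : α ≠ 0) :
    ¬ (X - (1 + 2 / ((n : ℝ) * c + 2)) * Y / α +
          ((n : ℝ) * c / 2) * ((n : ℝ) * c / 2 + 1) * α ^ 3 = 0 ∧
       Y + (((n : ℝ) * c + 2) * ((n : ℝ) * c * ((n : ℝ) - p) + 3 * (n : ℝ) * c -
              2 * ((p : ℝ) - 1)) / (4 * ((n : ℝ) - p))) * α ^ 4 = 0 ∧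
       -X + (2 * ((p : ℝ) - 1) / ((n : ℝ) * c + 2) +
              ((n : ℝ) - p) * (3 * (n : ℝ) * c - 2 * ((p : ℝ) - 1)) /
                ((n : ℝ) * c * ((n : ℝ) - p) + 3 * (n : ℝ) * c - 2 * ((p : ℝ) - 1))) * Y / α +
          ((n : ℝ) ^ 2 * c ^ 2 / 4 + ((p : ℝ) - 1) ^ 2 +
              (3 * (n : ℝ) * c - 2 * ((p : ℝ) - 1)) ^ 2 / (4 * ((n : ℝ) - p))) * α ^ 3 = 0) := by
  rintro ⟨h1, h2, h3⟩
  have hm : (0 : ℝ) < n - p := sub_pos.mpr (by exact_mod_cast hpn)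
  have hq : (0 : ℝ) < p - 1 := by
    have : (2 : ℝ) ≤ p := by exact_mod_cast hp
    linarith
  have hD : (n : ℝ) * c * ((n : ℝ) - p) + 3 * (n : ℝ) * c - 2 * ((p : ℝ) - 1)
      = 2 * ((n - p) + 3 - (p - 1)) := by linear_combination ((n : ℝ) - p + 3) * hc
  have h3c : 3 * (n : ℝ) * c = 6 := by linear_combination 3 * hc
  have hsq : (n : ℝ) ^ 2 * c ^ 2 = 4 := by linear_combination ((n : ℝ) * c + 2) * hc
  rw [hD] at hden h2 h3
  rw [h3c, hsq, hc] at h3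
  rw [hc] at h1 h2
  refine reduced_system_no_solution (X := X) (Y := Y) hm hq (right_ne_zero_of_mul hden) hα
    (by linear_combination h1) ?_ ?_
  · convert h2 using 2
    field_simp
    ring
  · convert h3 using 2 <;> field_simp <;> ring
end
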